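/- arXiv:2504.16495 — 3 statements merged into one kernel-verified Lean document; each statement's English description precedes it below -/
import Mathlib

section
/- Let (A, ·) be a perm algebra and r ∈ A ⊗ A. Then r is (R, ad)-invariant if and only if Tᵣ(ad*(a)a*) = Tᵣ(a*)·a for all a ∈ A, a* ∈ A*. -/
open TensorProduct

section
variable {K : Type*} [Field K] {A : Type*} [AddCommGroup A] [Module K A]

/-- perm identity for a plain binary operation -/
def IsPermFn {X : Type*} (mu : X → X → X) : Prop :=
  ∀ a b c : X, mu a (mu b c) = mu (mu a b) c ∧ mu (mu a b) c = mu (mu b a) c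

/-- perm algebra: bundled bilinear multiplication satisfying the perm identities -/
def IsPermMul (m : A →ₗ[K] A →ₗ[K] A) : Prop :=
  ∀ a b c : A, m a (m b c) = m (m a b) c ∧ m (m a b) c = m (m b a) c

/-- The map `T_r : A* → A` associated with a 2-tensor `r ∈ A ⊗ A`,
`T_r(a*) = Σ ⟨a*, a_i⟩ b_i` for `r = Σ a_i ⊗ b_i`. -/
noncomputable def Tten (r : A ⊗[K] A) : Module.Dual K A →ₗ[K] A :=
  TensorProduct.lift (LinearMap.mk₂ K
    (fun a b => (Module.Dual.eval K A a).smulRight b)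
    (by intro a a' b; ext f; simp [add_smul])
    (by intro c a b; ext f; simp [mul_smul])
    (by intro a b b'; ext f; simp [smul_add])
    (by intro c a b; ext f; simp [smul_comm c])) r

noncomputable def mulT (m : A →ₗ[K] A →ₗ[K] A) : A ⊗[K] A →ₗ[K] A := TensorProduct.lift m

noncomputable def p13_23 (m : A →ₗ[K] A →ₗ[K] A) :
    (A ⊗[K] A) ⊗[K] (A ⊗[K] A) →ₗ[K] (A ⊗[K] A) ⊗[K] A :=
  (TensorProduct.map LinearMap.id (mulT m)) ∘ₗ
    (TensorProduct.tensorTensorTensorComm K A A A A).toLinearMap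

noncomputable def p12_13 (m : A →ₗ[K] A →ₗ[K] A) :
    (A ⊗[K] A) ⊗[K] (A ⊗[K] A) →ₗ[K] (A ⊗[K] A) ⊗[K] A :=
  (TensorProduct.assoc K A A A).symm.toLinearMap ∘ₗ
    (TensorProduct.map (mulT m) LinearMap.id) ∘ₗ
    (TensorProduct.tensorTensorTensorComm K A A A A).toLinearMap

noncomputable def p13_12 (m : A →ₗ[K] A →ₗ[K] A) :
    (A ⊗[K] A) ⊗[K] (A ⊗[K] A) →ₗ[K] (A ⊗[K] A) ⊗[K] A :=
  (TensorProduct.assoc K A A A).symm.toLinearMap ∘ₗ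
    (TensorProduct.map (mulT m) (TensorProduct.comm K A A).toLinearMap) ∘ₗ
    (TensorProduct.tensorTensorTensorComm K A A A A).toLinearMap

noncomputable def p12_23 (m : A →ₗ[K] A →ₗ[K] A) :
    (A ⊗[K] A) ⊗[K] (A ⊗[K] A) →ₗ[K] (A ⊗[K] A) ⊗[K] A :=
  (TensorProduct.assoc K A A A).symm.toLinearMap ∘ₗ
    (TensorProduct.leftComm K A A A).toLinearMap ∘ₗ
    (TensorProduct.map (mulT m) LinearMap.id) ∘ₗ
    (TensorProduct.tensorTensorTensorComm K A A A A).toLinearMap ∘ₗ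
    (TensorProduct.map (TensorProduct.comm K A A).toLinearMap LinearMap.id)

/-- `[[r,r]] = r₁₂·r₂₃ − r₁₃·r₂₃ + r₁₂·r₁₃ − r₁₃·r₁₂` -/
noncomputable def ybrac (m : A →ₗ[K] A →ₗ[K] A) (r : A ⊗[K] A) : (A ⊗[K] A) ⊗[K] A :=
  p12_23 m (r ⊗ₜ r) - p13_23 m (r ⊗ₜ r) + p12_13 m (r ⊗ₜ r) - p13_12 m (r ⊗ₜ r)

/-- the perm Yang-Baxter equation -/
noncomputable def IsPYBESol (m : A →ₗ[K] A →ₗ[K] A) (r : A ⊗[K] A) : Prop := ybrac m r = 0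

/-- `(id ⊗ R(a) − ad(a) ⊗ id)(s) = 0` for all `a`. -/
def RadInv (m : A →ₗ[K] A →ₗ[K] A) (s : A ⊗[K] A) : Prop :=
  ∀ a : A, TensorProduct.map LinearMap.id (m.flip a) s
    = TensorProduct.map (m a - m.flip a) LinearMap.id s

variable {V : Type*} [AddCommGroup V] [Module K V]

/-- representation of a perm algebra -/
def IsPermRep (m : A →ₗ[K] A →ₗ[K] A) (l rr : A →ₗ[K] V →ₗ[K] V) : Prop :=
  ∀ a b : A, l (m a b) = l a ∘ₗ l b ∧ l a ∘ₗ l b = l b ∘ₗ l a ∧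
    rr (m a b) = rr b ∘ₗ rr a ∧ rr b ∘ₗ rr a = rr b ∘ₗ l a ∧ rr b ∘ₗ l a = l a ∘ₗ rr b

/-- A-perm algebra -/
def IsAPermAlg (m : A →ₗ[K] A →ₗ[K] A) (l rr : A →ₗ[K] V →ₗ[K] V)
    (mV : V →ₗ[K] V →ₗ[K] V) : Prop :=
  IsPermRep m l rr ∧ IsPermMul mV ∧
  (∀ (a : A) (u w : V), rr a (mV u w) = rr a (mV w u) ∧ rr a (mV u w) = mV u (rr a w)) ∧
  (∀ (a : A) (u w : V), mV (l a u) w = mV (rr a u) w ∧ mV (l a u) w = l a (mV u w) ∧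
    l a (mV u w) = mV u (l a w))

/-! Under `r ↦ T_r`, the operator `id ⊗ R(a)` becomes postcomposition with `R(a)` and
`ad(a) ⊗ id` becomes precomposition with `ad*(a)`. Since `r ↦ T_r` is injective, the invariance
equation for `r` is equivalent to its image `R(a) ∘ T_r = T_r ∘ ad*(a)`. -/

theorem Tten_apply (s : A ⊗[K] A) (f : Module.Dual K A) :
    Tten s f = TensorProduct.lid K A (f.rTensor A s) := by
  induction s using TensorProduct.induction_on with
  | zero => simp [Tten]
  | tmul x y => rfl
  | add s t hs ht => simp only [Tten, map_add, LinearMap.add_apply] at hs ht ⊢; rw [hs, ht]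

theorem Tten_map (g h : A →ₗ[K] A) (s : A ⊗[K] A) (f : Module.Dual K A) :
    Tten (TensorProduct.map g h s) f = h (Tten s (g.dualMap f)) := by
  induction s using TensorProduct.induction_on with
  | zero => simp [Tten_apply]
  | tmul x y => simp [Tten_apply]
  | add s t hs ht => simp only [Tten_apply, map_add] at hs ht ⊢; rw [hs, ht]

/-- In a basis `b` of the first factor, the coordinates of `s` are the values of `Tten s` on the
coordinate functionals `b.coord i`. -/
theorem Tten_injective : Function.Injective (Tten : A ⊗[K] A → Module.Dual K A →ₗ[K] A) := by
  classical
  let b := Module.Basis.ofVectorSpace K A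
  let e := (TensorProduct.congr b.repr (LinearEquiv.refl K A)).trans (finsuppScalarLeft K A _)
  have he : ∀ s i, e s i = Tten s (b.coord i) := by
    intro s i
    simp only [e, LinearEquiv.trans_apply, finsuppScalarLeft_apply, Tten_apply]
    exact congrArg _ (LinearMap.rTensor_comp_apply A (Finsupp.lapply i) b.repr.toLinearMap s).symm
  intro s t hst
  apply e.injective
  ext i
  rw [he, he, hst]

theorem stmt7_general (m : A →ₗ[K] A →ₗ[K] A)
    (r : A ⊗[K] A) :
    RadInv m r ↔
      ∀ (a : A) (f : Module.Dual K A),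
        Tten r ((m a - m.flip a).dualMap f) = m (Tten r f) a := by
  refine forall_congr' fun a => ?_
  rw [← Tten_injective.eq_iff, LinearMap.ext_iff]
  simp only [Tten_map, LinearMap.dualMap_id, LinearMap.id_apply, LinearMap.flip_apply, eq_comm]

theorem stmt7 [FiniteDimensional K A] (m : A →ₗ[K] A →ₗ[K] A) (hm : IsPermMul m)
    (r : A ⊗[K] A) :
    RadInv m r ↔
      ∀ (a : A) (f : Module.Dual K A),
        Tten r ((m a - m.flip a).dualMap f) = m (Tten r f) a :=
  stmt7_general m r

end
end

section
/- Let (A, ·) be a perm algebra and r ∈ A ⊗ A skew-symmetric and (R, ad)-invariant. Define a* ◇ b* = L*(Tᵣ(a*))b* on A*. Then (A*, L*, ad*, ◇) is an A-perm algebra; in particular (A*, ◇) is a perm algebra satisfying (a*◇b*)◇c* = (b*◇a*)◇c* = a*◇(b*◇c*). -/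
/-!
Skew-symmetry turns the `(R, ad)`-invariance of `r` into `(R(a) ⊗ id) r = (id ⊗ ad(a)) r`,
and adding the two gives `(L(a) ⊗ id) r = (id ⊗ L(a)) r`. Dually, `T_r` intertwines `L*`
with `L` and `R*` with `ad`, so `T_r (a* ◇ b*) = T_r a* · T_r b*`. Evaluating each required
identity at a point of `A` and pushing `T_r` inside reduces it to a perm identity in `A`,
except the symmetry `ad*(a)(a* ◇ b*) = ad*(a)(b* ◇ a*)`: there the argument `y = a·c − c·a`
satisfies `L(y) = 0`, and the skew-symmetric pairing `⟨a*, T_r b*⟩ = −⟨b*, T_r a*⟩` swaps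
the two factors.
-/

open TensorProduct

section
variable {K : Type*} [Field K] {A : Type*} [AddCommGroup A] [Module K A]

variable {V : Type*} [AddCommGroup V] [Module K V]

lemma Tten_tmul (a b : A) (φ : Module.Dual K A) : Tten (a ⊗ₜ[K] b) φ = φ a • b := by
  simp [Tten]

lemma Tten_map_left (f : A →ₗ[K] A) (s : A ⊗[K] A) (φ : Module.Dual K A) :
    Tten (TensorProduct.map f LinearMap.id s) φ = Tten s (Module.Dual.transpose f φ) := by
  induction s using TensorProduct.induction_on with
  | zero => simp [Tten]
  | tmul a b => simp [Tten_tmul, Module.Dual.transpose_apply]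
  | add x y hx hy => simp_all [Tten]

lemma Tten_map_right (f : A →ₗ[K] A) (s : A ⊗[K] A) (φ : Module.Dual K A) :
    Tten (TensorProduct.map LinearMap.id f s) φ = f (Tten s φ) := by
  induction s using TensorProduct.induction_on with
  | zero => simp [Tten]
  | tmul a b => simp [Tten_tmul]
  | add x y hx hy => simp_all [Tten]

lemma apply_Tten_comm (s : A ⊗[K] A) (φ ψ : Module.Dual K A) :
    φ (Tten s ψ) = ψ (Tten (TensorProduct.comm K A A s) φ) := by
  induction s using TensorProduct.induction_on with
  | zero => simp [Tten]
  | tmul a b => simp [Tten_tmul, mul_comm]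
  | add x y hx hy => simp_all [Tten]

section PermAlgebra

variable {m : A →ₗ[K] A →ₗ[K] A}

lemma IsPermMul.assoc (hm : IsPermMul m) (a b c : A) : m (m a b) c = m a (m b c) :=
  (hm a b c).1.symm

lemma IsPermMul.comm_left (hm : IsPermMul m) (a b c : A) : m (m a b) c = m (m b a) c :=
  (hm a b c).2

lemma IsPermMul.left_comm (hm : IsPermMul m) (a b c : A) : m a (m b c) = m b (m a c) := by
  rw [← hm.assoc, hm.comm_left, hm.assoc]

lemma IsPermMul.mul_commutator (hm : IsPermMul m) (a b : A) : m (m a b - m b a) = 0 := by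
  ext c
  simp [hm.comm_left a b]

lemma IsPermMul.isPermRep_dual (hm : IsPermMul m) :
    IsPermRep m (Module.Dual.transpose (R := K) ∘ₗ m)
      (Module.Dual.transpose (R := K) ∘ₗ (m - m.flip)) := by
  intro a b
  refine ⟨?_, ?_, ?_, ?_, ?_⟩ <;> ext φ c <;>
    simp only [LinearMap.comp_apply, LinearMap.sub_apply, Module.Dual.transpose_apply,
      LinearMap.flip_apply, map_sub, hm.assoc, hm.left_comm] <;>
    abel

end PermAlgebra

section SkewInvariant

variable {m : A →ₗ[K] A →ₗ[K] A} {r : A ⊗[K] A}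

lemma apply_Tten_of_comm_eq_neg (hskew : TensorProduct.comm K A A r = -r)
    (φ ψ : Module.Dual K A) : φ (Tten r ψ) = -ψ (Tten r φ) := by
  rw [apply_Tten_comm, hskew]
  simp [Tten]

lemma RadInv.map_flip_left (hskew : TensorProduct.comm K A A r = -r) (hinv : RadInv m r)
    (a : A) : TensorProduct.map (m.flip a) LinearMap.id r
      = TensorProduct.map LinearMap.id (m a - m.flip a) r := by
  have h := congrArg (TensorProduct.comm K A A) (hinv a)
  rwa [← TensorProduct.map_comm, ← TensorProduct.map_comm, hskew, map_neg, map_neg,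
    neg_inj] at h

lemma RadInv.map_mul_left (hskew : TensorProduct.comm K A A r = -r) (hinv : RadInv m r)
    (a : A) : TensorProduct.map (m a) LinearMap.id r = TensorProduct.map LinearMap.id (m a) r := by
  have h := hinv.map_flip_left hskew a
  rw [← sub_add_cancel (m a) (m.flip a), TensorProduct.map_add_left,
    TensorProduct.map_add_right, LinearMap.add_apply, LinearMap.add_apply, h, ← hinv a]
  abel

lemma RadInv.Tten_comp_mul (hskew : TensorProduct.comm K A A r = -r) (hinv : RadInv m r)
    (a : A) (φ : Module.Dual K A) : Tten r (φ ∘ₗ m a) = m a (Tten r φ) := by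
  rw [← Module.Dual.transpose_apply, ← Tten_map_left, hinv.map_mul_left hskew, Tten_map_right]

lemma RadInv.Tten_comp_flip (hskew : TensorProduct.comm K A A r = -r) (hinv : RadInv m r)
    (a : A) (φ : Module.Dual K A) :
    Tten r (φ ∘ₗ m.flip a) = m a (Tten r φ) - m (Tten r φ) a := by
  rw [← Module.Dual.transpose_apply, ← Tten_map_left, hinv.map_flip_left hskew, Tten_map_right]
  rfl

lemma RadInv.apply_mul_Tten_comm (hskew : TensorProduct.comm K A A r = -r)
    (hinv : RadInv m r) {y : A} (hy : m y = 0) (φ ψ : Module.Dual K A) :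
    ψ (m (Tten r φ) y) = φ (m (Tten r ψ) y) := by
  calc ψ (m (Tten r φ) y) = (ψ ∘ₗ m.flip y) (Tten r φ) := rfl
    _ = -φ (Tten r (ψ ∘ₗ m.flip y)) := apply_Tten_of_comm_eq_neg hskew _ _
    _ = -φ ((m y - m.flip y) (Tten r ψ)) := by
      rw [← Module.Dual.transpose_apply, ← Tten_map_left, hinv.map_flip_left hskew,
        Tten_map_right]
    _ = φ (m (Tten r ψ) y) := by simp [hy]

end SkewInvariant

theorem stmt10_general (m : A →ₗ[K] A →ₗ[K] A) (hm : IsPermMul m)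
    (r : A ⊗[K] A) (hskew : (TensorProduct.comm K A A) r = -r) (hinv : RadInv m r) :
    IsAPermAlg m (Module.Dual.transpose (R := K) ∘ₗ m)
      (Module.Dual.transpose (R := K) ∘ₗ (m - m.flip))
      ((Module.Dual.transpose (R := K) ∘ₗ m) ∘ₗ Tten r) := by
  refine ⟨hm.isPermRep_dual, fun φ ψ χ => ⟨?_, ?_⟩, fun a φ ψ => ⟨?symm, ?_⟩,
    fun a φ ψ => ⟨?_, ?_, ?_⟩⟩ <;> ext c <;>
    simp only [LinearMap.comp_apply, LinearMap.sub_apply, Module.Dual.transpose_apply,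
      LinearMap.flip_apply, map_sub, hinv.Tten_comp_mul hskew, hinv.Tten_comp_flip hskew]
  case symm =>
    simpa using hinv.apply_mul_Tten_comm hskew (hm.mul_commutator a c) φ ψ
  all_goals simp only [hm.assoc, hm.left_comm, sub_self, sub_zero]

theorem stmt10 [FiniteDimensional K A] (m : A →ₗ[K] A →ₗ[K] A) (hm : IsPermMul m)
    (r : A ⊗[K] A) (hskew : (TensorProduct.comm K A A) r = -r) (hinv : RadInv m r) :
    IsAPermAlg m (Module.Dual.transpose (R := K) ∘ₗ m)
      (Module.Dual.transpose (R := K) ∘ₗ (m - m.flip))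
      ((Module.Dual.transpose (R := K) ∘ₗ m) ∘ₗ Tten r) :=
  stmt10_general m hm r hskew hinv

end
end

section
/- Let P be a Rota-Baxter operator of weight λ on a perm algebra (A, ·). Then on the semi-direct product perm algebra A ⋉_{L*, ad*} A*, the bilinear form 𝔅_d(a+a*, b+b*) = ⟨a, b*⟩ − ⟨a*, b⟩ together with the operator P − (λ·id + P)* (acting as P on A and as −(λ·id + P)* on A*) makes (A ⋉_{L*,ad*} A*, ·, 𝔅_d, P − (λ id + P)*) a quadratic Rota-Baxter perm algebra of weight λ. -/
/-!
The perm identities of `A ⋉ A*` amount to `(L*, ad*)` being a representation, and by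
transposition this is a list of operator identities on `A` (`L_{ab} = L_b L_a`,
`ad_{ab} = ad_a ad_b`, `ad_a ad_b = L_a ad_b`, ...), each a two-step consequence of the perm
axioms. Invariance of `𝔅_d` holds for any bilinear multiplication, and
`P − (λ id + P)*` satisfies the compatibility with `𝔅_d` by construction. On the `A*`-component
the Rota–Baxter identity of `P − (λ id + P)*` is the Rota–Baxter identity of `P` paired with
the functionals.
-/

open TensorProduct

section
variable {K : Type*} [Field K] {A : Type*} [AddCommGroup A] [Module K A]

variable {V : Type*} [AddCommGroup V] [Module K V]

/-- Rota-Baxter operator of weight `lam` on a perm algebra. -/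
def IsRB (m : A →ₗ[K] A →ₗ[K] A) (lam : K) (P : A →ₗ[K] A) : Prop :=
  ∀ a b : A, m (P a) (P b) = P (m (P a) b + m a (P b) + lam • m a b)

def IsRBFn {X : Type*} [AddCommGroup X] [Module K X]
    (mu : X → X → X) (lam : K) (P : X → X) : Prop :=
  ∀ a b : X, mu (P a) (P b) = P (mu (P a) b + mu a (P b) + lam • mu a b)

/-- quadratic Rota-Baxter perm algebra of weight `lam` (plain-function version) -/
def IsQuadRBFn {X : Type*} [AddCommGroup X] [Module K X]
    (mu : X → X → X) (B : X → X → K) (P : X → X) (lam : K) : Prop :=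
  IsPermFn mu ∧ (∀ x : X, (∀ y : X, B x y = 0) → x = 0) ∧
  (∀ x y : X, B x y = - B y x) ∧
  (∀ x y z : X, B (mu x y) z = B x (mu y z - mu z y)) ∧
  IsRBFn mu lam P ∧ ∀ x y : X, B (P x) y + B x (P y) + lam * B x y = 0

namespace IsPermMul

variable {m : A →ₗ[K] A →ₗ[K] A}

theorem left_comm_s14 (hm : IsPermMul m) (a b c : A) : m a (m b c) = m b (m a c) := by
  rw [(hm a b c).1, (hm a b c).2, (hm b a c).1]

theorem mul_mul_eq_mul_mul_right (hm : IsPermMul m) (a b c : A) :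
    m c (m a b) = m (m a c) b := by
  rw [(hm c a b).1, (hm c a b).2]

end IsPermMul

def semidirectMul (m : A →ₗ[K] A →ₗ[K] A) (l rr : A →ₗ[K] V →ₗ[K] V) (p q : A × V) : A × V :=
  (m p.1 q.1, l p.1 q.2 + rr q.1 p.2)

theorem isPermFn_semidirectMul {m : A →ₗ[K] A →ₗ[K] A} {l rr : A →ₗ[K] V →ₗ[K] V}
    (hm : IsPermMul m) (hrep : IsPermRep m l rr) : IsPermFn (semidirectMul m l rr) := by
  rintro ⟨a, u⟩ ⟨b, v⟩ ⟨c, w⟩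
  have hl_mul : ∀ x y z, l (m x y) z = l x (l y z) := fun x y => LinearMap.congr_fun (hrep x y).1
  have hl_comm : ∀ z, l a (l b z) = l b (l a z) := LinearMap.congr_fun (hrep a b).2.1
  have hr_mul : ∀ z, rr (m b c) z = rr c (rr b z) := LinearMap.congr_fun (hrep b c).2.2.1
  have hr_left : ∀ x z, rr c (rr x z) = rr c (l x z) := fun x =>
    LinearMap.congr_fun (hrep x c).2.2.2.1
  have hr_comm : ∀ z, rr c (l a z) = l a (rr c z) := LinearMap.congr_fun (hrep a c).2.2.2.2
  refine ⟨Prod.ext (hm a b c).1 ?_, Prod.ext (hm a b c).2 ?_⟩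
  · simp only [semidirectMul, map_add, hl_mul, hr_mul, hr_comm]
    abel
  · simp only [semidirectMul, map_add, hl_mul, hl_comm, hr_left]
    abel

/-- The dual representation `a ↦ (μ a)*` on `A*`; `L*` and `ad*` are `dualRep m` and
`dualRep (m - m.flip)`. -/
def dualRep (μ : A →ₗ[K] A →ₗ[K] A) : A →ₗ[K] Module.Dual K A →ₗ[K] Module.Dual K A :=
  Module.Dual.transpose ∘ₗ μ

theorem isPermRep_dualRep {m : A →ₗ[K] A →ₗ[K] A} (hm : IsPermMul m) :
    IsPermRep m (dualRep m) (dualRep (m - m.flip)) := by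
  intro a b
  simp only [dualRep, LinearMap.comp_apply, ← Module.Dual.transpose_comp]
  refine ⟨congrArg _ ?_, congrArg _ ?_, congrArg _ ?_, congrArg _ ?_, congrArg _ ?_⟩ <;> ext c <;>
    simp only [LinearMap.comp_apply, LinearMap.sub_apply, LinearMap.flip_apply, map_sub]
  · rw [(hm a b c).2, (hm b a c).1]
  · exact hm.left_comm_s14 b a c
  · rw [hm.mul_mul_eq_mul_mul_right, (hm a b c).1, (hm a c b).1, (hm b c a).2]
    abel
  · rw [(hm b c a).2]
    abel
  · rw [hm.left_comm_s14 a b c, (hm a c b).1]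

theorem semidirectMul_dualRep (m : A →ₗ[K] A →ₗ[K] A) :
    semidirectMul m (dualRep m) (dualRep (m - m.flip)) = fun p q : A × Module.Dual K A =>
      (m p.1 q.1, (m p.1).dualMap q.2 + (m q.1 - m.flip q.1).dualMap p.2) :=
  rfl

def skewDualPairing (p q : A × Module.Dual K A) : K := q.2 p.1 - p.2 q.1

theorem eq_zero_of_forall_skewDualPairing_eq_zero (x : A × Module.Dual K A)
    (h : ∀ y, skewDualPairing x y = 0) : x = 0 := by
  obtain ⟨a, f⟩ := x
  have ha : a = 0 := (Module.forall_dual_apply_eq_zero_iff K a).1 fun φ => by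
    simpa [skewDualPairing] using h (0, φ)
  have hf : f = 0 := LinearMap.ext fun b => by simpa [skewDualPairing] using h (b, 0)
  rw [ha, hf, Prod.mk_zero_zero]

theorem skewDualPairing_semidirectMul (m : A →ₗ[K] A →ₗ[K] A) (x y z : A × Module.Dual K A) :
    skewDualPairing (semidirectMul m (dualRep m) (dualRep (m - m.flip)) x y) z =
      skewDualPairing x (semidirectMul m (dualRep m) (dualRep (m - m.flip)) y z -
        semidirectMul m (dualRep m) (dualRep (m - m.flip)) z y) := by
  simp only [skewDualPairing, semidirectMul, dualRep, Prod.fst_sub, Prod.snd_sub,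
    LinearMap.comp_apply, Module.Dual.transpose_apply, LinearMap.sub_apply, LinearMap.add_apply,
    LinearMap.flip_apply, map_sub]
  ring

/-- The operator `P − (λ id + P)*` on `A ⊕ A*`. -/
def rotaBaxterDual (P : A →ₗ[K] A) (lam : K) (p : A × Module.Dual K A) : A × Module.Dual K A :=
  (P p.1, -((lam • LinearMap.id + P).dualMap p.2))

theorem skewDualPairing_rotaBaxterDual (P : A →ₗ[K] A) (lam : K) (x y : A × Module.Dual K A) :
    skewDualPairing (rotaBaxterDual P lam x) y + skewDualPairing x (rotaBaxterDual P lam y)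
      + lam * skewDualPairing x y = 0 := by
  simp only [skewDualPairing, rotaBaxterDual, LinearMap.neg_apply, LinearMap.dualMap_apply,
    LinearMap.add_apply, LinearMap.smul_apply, LinearMap.id_coe, id_eq, map_add, map_smul,
    smul_eq_mul]
  ring

theorem isRBFn_rotaBaxterDual {m : A →ₗ[K] A →ₗ[K] A} {P : A →ₗ[K] A} {lam : K}
    (hP : IsRB m lam P) :
    IsRBFn (semidirectMul m (dualRep m) (dualRep (m - m.flip))) lam (rotaBaxterDual P lam) := by
  rintro ⟨a, f⟩ ⟨b, g⟩
  have hP_dual : ∀ (φ : Module.Dual K A) x y, φ (m (P x) (P y))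
      = φ (P (m (P x) y)) + φ (P (m x (P y))) + lam * φ (P (m x y)) := by
    intro φ x y
    simp only [hP x y, map_add, map_smul, smul_eq_mul]
  refine Prod.ext ?_ (LinearMap.ext fun d => ?_)
  · exact hP a b
  · simp only [semidirectMul, rotaBaxterDual, dualRep, LinearMap.comp_apply,
      Module.Dual.transpose_apply, LinearMap.add_apply, LinearMap.dualMap_apply,
      LinearMap.sub_apply, LinearMap.flip_apply, LinearMap.neg_apply, LinearMap.smul_apply,
      LinearMap.id_coe, id_eq, Prod.smul_mk, Prod.mk_add_mk, map_add,
      map_sub, map_smul, smul_eq_mul]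
    linear_combination hP_dual g a d + hP_dual f b d - hP_dual f d b

theorem stmt14_general (m : A →ₗ[K] A →ₗ[K] A) (hm : IsPermMul m)
    (P : A →ₗ[K] A) (lam : K) (hP : IsRB m lam P) :
    IsQuadRBFn
      (fun p q : A × Module.Dual K A =>
        (m p.1 q.1, (m p.1).dualMap q.2 + (m q.1 - m.flip q.1).dualMap p.2))
      (fun p q : A × Module.Dual K A => q.2 p.1 - p.2 q.1)
      (fun p : A × Module.Dual K A =>
        (P p.1, -((lam • LinearMap.id + P).dualMap p.2)))
      lam := by
  rw [← semidirectMul_dualRep]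
  exact ⟨isPermFn_semidirectMul hm (isPermRep_dualRep hm),
    eq_zero_of_forall_skewDualPairing_eq_zero, fun _ _ => (neg_sub _ _).symm,
    skewDualPairing_semidirectMul m, isRBFn_rotaBaxterDual hP,
    skewDualPairing_rotaBaxterDual P lam⟩

theorem stmt14 [FiniteDimensional K A] (m : A →ₗ[K] A →ₗ[K] A) (hm : IsPermMul m)
    (P : A →ₗ[K] A) (lam : K) (hP : IsRB m lam P) :
    IsQuadRBFn
      (fun p q : A × Module.Dual K A =>
        (m p.1 q.1, (m p.1).dualMap q.2 + (m q.1 - m.flip q.1).dualMap p.2))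
      (fun p q : A × Module.Dual K A => q.2 p.1 - p.2 q.1)
      (fun p : A × Module.Dual K A =>
        (P p.1, -((lam • LinearMap.id + P).dualMap p.2)))
      lam :=
  stmt14_general m hm P lam hP

end
end
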